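/- Let C_t = C(2t,t)·2^t and D_t = Σ_{j=1}^{t} (-1)^(j-1)·C_{t-j}. Then D_t / C_t → 1/9 as t → ∞. -/

import Mathlib

def C (t : ℕ) : ℕ := Nat.choose (2 * t) t * 2 ^ t

def D (t : ℕ) : ℤ := ∑ j ∈ Finset.range t, (-1) ^ j * (C (t - 1 - j) : ℤ)

/-!
Since `C (t + 1) / C t = (8t + 4) / (t + 1)` and `D (t + 1) = C t - D t`, the ratio
`r t = D t / C t` obeys `r (t + 1) = q t * (1 - r t)` with `q t = (t + 1) / (8t + 4) ≤ 1/4`.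
As `q t → 1/8` and `x ↦ (1 - x) / 8` has fixed point `1/9`, the error `r t - 1/9` contracts by a factor `1/4`
per step up to a perturbation `(8 q t - 1) / 9 = 1 / (9 (2t + 1))`, which gives `|r t - 1/9| ≤ 1/t`.
-/

open Filter

lemma C_pos (t : ℕ) : 0 < C t :=
  Nat.mul_pos (Nat.centralBinom_pos t) (pow_pos two_pos t)

lemma succ_mul_C_succ (t : ℕ) : (t + 1) * C (t + 1) = (8 * t + 4) * C t := by
  have h := Nat.succ_mul_centralBinom_succ t
  simp only [C, ← Nat.centralBinom_eq_two_mul_choose, pow_succ] at h ⊢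
  linear_combination (2 * 2 ^ t) * h

lemma D_succ (t : ℕ) : D (t + 1) = C t - D t := by
  rw [D, Finset.sum_range_succ', D, sub_eq_add_neg, ← Finset.sum_neg_distrib, add_comm]
  congr 1
  · simp
  · refine Finset.sum_congr rfl fun j _ => ?_
    rw [show t + 1 - 1 - (j + 1) = t - 1 - j by omega, pow_succ]
    ring

lemma D_div_C_succ (t : ℕ) :
    (D (t + 1) : ℝ) / C (t + 1) = (t + 1) / (8 * t + 4) * (1 - D t / C t) := by
  have hC : (C t : ℝ) ≠ 0 := by exact_mod_cast (C_pos t).ne'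
  have hC' : (C (t + 1) : ℝ) ≠ 0 := by exact_mod_cast (C_pos (t + 1)).ne'
  have hrec : ((t : ℝ) + 1) * C (t + 1) = (8 * t + 4) * C t := by
    exact_mod_cast succ_mul_C_succ t
  rw [D_succ]
  push_cast
  field_simp
  linear_combination ((D t : ℝ) - C t) * hrec

lemma abs_D_div_C_succ_sub_le (t : ℕ) :
    |(D (t + 1) : ℝ) / C (t + 1) - 1 / 9|
      ≤ |(D t : ℝ) / C t - 1 / 9| / 4 + 1 / (9 * (2 * t + 1)) := by
  set r : ℝ := D t / C t
  set q : ℝ := (t + 1) / (8 * t + 4)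
  have hq_nonneg : 0 ≤ q := by positivity
  have hq_le : q ≤ 1 / 4 := by
    rw [div_le_div_iff₀ (by positivity) (by norm_num)]
    linarith
  have hsplit : q * (1 - r) - 1 / 9 = -(q * (r - 1 / 9)) + 1 / (9 * (2 * t + 1)) := by
    simp only [q]
    field_simp
    ring
  rw [D_div_C_succ, hsplit]
  calc |-(q * (r - 1 / 9)) + 1 / (9 * (2 * t + 1))|
      ≤ q * |r - 1 / 9| + 1 / (9 * (2 * t + 1)) := by
        refine (abs_add_le _ _).trans ?_
        rw [abs_neg, abs_mul, abs_of_nonneg hq_nonneg,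
          abs_of_nonneg (show (0 : ℝ) ≤ 1 / (9 * (2 * t + 1)) by positivity)]
    _ ≤ |r - 1 / 9| / 4 + 1 / (9 * (2 * t + 1)) := by
        have := mul_le_mul_of_nonneg_right hq_le (abs_nonneg (r - 1 / 9))
        linarith

lemma abs_D_div_C_sub_le {t : ℕ} (ht : 1 ≤ t) : |(D t : ℝ) / C t - 1 / 9| ≤ 1 / t := by
  induction t, ht using Nat.le_induction with
  | base => norm_num [D, C]
  | succ t ht ih =>
    have ht' : (1 : ℝ) ≤ t := by exact_mod_cast ht
    have hperturb : 1 / (4 * (t : ℝ)) + 1 / (9 * (2 * t + 1)) ≤ 1 / (t + 1) := by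
      rw [div_add_div _ _ (by positivity) (by positivity),
        div_le_div_iff₀ (by positivity) (by positivity)]
      nlinarith
    calc |(D (t + 1) : ℝ) / C (t + 1) - 1 / 9|
        ≤ |(D t : ℝ) / C t - 1 / 9| / 4 + 1 / (9 * (2 * t + 1)) := abs_D_div_C_succ_sub_le t
      _ ≤ 1 / (4 * t) + 1 / (9 * (2 * t + 1)) := by
          rw [show (1 : ℝ) / (4 * t) = 1 / t / 4 by ring]
          gcongr
      _ ≤ 1 / ((t + 1 : ℕ) : ℝ) := by push_cast; exact hperturb

theorem stmt18 :
    Filter.Tendsto (fun t : ℕ => (D t : ℝ) / (C t : ℝ)) Filter.atTop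
      (nhds (1 / 9)) := by
  rw [← tendsto_sub_nhds_zero_iff]
  refine squeeze_zero_norm' ?_ tendsto_one_div_atTop_nhds_zero_nat
  filter_upwards [eventually_ge_atTop 1] with t ht
  exact abs_D_div_C_sub_le ht
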